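/- Let n ≥ 3 and M be positive integers, A = 6M - n(n+1)(n+5), and let R(n,M) = 2¹⁴·3⁶·M⁶ - 2¹³·3⁷·n(n+1)(n+3)M⁵ + 2⁹·3⁵·n²(n+1)(n⁴+93n³+629n²+1339n+818)M⁴ - 2⁷·3⁴·n³(n+1)²(13n⁵+436n⁴+3688n³+12782n²+19163n+9998)M³ + 2²·3³·n⁴(n+1)³(n+2)(n+7)²(5n⁴+447n³+3303n²+7873n+5652)M² - 2²·3³·n⁵(n+1)⁴(n+2)²(n+5)²(n+7)³(3n+5)M + n⁶(n+1)⁵(n+2)³(n+5)³(n+7)⁴. If the rational number M³(n-1)²(n+4)⁴A⁷ / (54·n⁴(n+1)²·R(n,M)) is a (nonzero) integer, then n divides 2¹⁵·3⁷·M¹⁰. -/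
import Mathlib


theorem stmt (n M : ℤ) (hn : 3 ≤ n) (hM : 0 < M)
    (A : ℤ) (hA : A = 6*M - n*(n+1)*(n+5))
    (R : ℤ) (hR : R = 2^14*3^6*M^6 - 2^13*3^7*n*(n+1)*(n+3)*M^5 + 2^9*3^5*n^2*(n+1)*(n^4+93*n^3+629*n^2+1339*n+818)*M^4 - 2^7*3^4*n^3*(n+1)^2*(13*n^5+436*n^4+3688*n^3+12782*n^2+19163*n+9998)*M^3 + 2^2*3^3*n^4*(n+1)^3*(n+2)*(n+7)^2*(5*n^4+447*n^3+3303*n^2+7873*n+5652)*M^2 - 2^2*3^3*n^5*(n+1)^4*(n+2)^2*(n+5)^2*(n+7)^3*(3*n+5)*M + n^6*(n+1)^5*(n+2)^3*(n+5)^3*(n+7)^4)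
    (hint : ∃ k : ℤ, k ≠ 0 ∧
      ((M^3*(n-1)^2*(n+4)^4*A^7 : ℚ) / (54*n^4*(n+1)^2*R) = (k : ℚ))) :
    n ∣ 2^15 * 3^7 * M^10 := by
  obtain ⟨k, hk0, hk⟩ := hint
  have hQ : ((M^3*(n-1)^2*(n+4)^4*A^7 : ℤ) : ℚ) / ((54*n^4*(n+1)^2*R : ℤ) : ℚ) = (k : ℚ) := by
    push_cast
    exact hk
  have hD0 : (54*n^4*(n+1)^2*R : ℤ) ≠ 0 := by
    intro h
    apply hk0
    rw [h] at hQ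
    simp at hQ
    exact_mod_cast hQ.symm
  have hN : (M^3*(n-1)^2*(n+4)^4*A^7 : ℤ) = k * (54*n^4*(n+1)^2*R) := by
    have hDQ : ((54*n^4*(n+1)^2*R : ℤ) : ℚ) ≠ 0 := Int.cast_ne_zero.mpr hD0
    rw [div_eq_iff hDQ] at hQ
    exact_mod_cast hQ
  have hdvdN : n ∣ (M^3*(n-1)^2*(n+4)^4*A^7 : ℤ) := by
    rw [hN]
    exact ⟨k*54*n^3*(n+1)^2*R, by ring⟩
  have h1 : (n - 1) ≡ -1 [ZMOD n] := Int.ModEq.symm (Int.modEq_iff_dvd.mpr ⟨1, by ring⟩)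
  have h2 : (n + 4) ≡ 4 [ZMOD n] := Int.ModEq.symm (Int.modEq_iff_dvd.mpr ⟨1, by ring⟩)
  have h3 : A ≡ 6*M [ZMOD n] := by
    rw [hA]
    exact Int.ModEq.symm (Int.modEq_iff_dvd.mpr ⟨-((n+1)*(n+5)), by ring⟩)
  have hmod : (M^3*(n-1)^2*(n+4)^4*A^7 : ℤ) ≡ M^3*(-1:ℤ)^2*4^4*(6*M)^7 [ZMOD n] :=
    (((Int.ModEq.refl (M^3)).mul (h1.pow 2)).mul (h2.pow 4)).mul (h3.pow 7)
  have hdvd2 : n ∣ (M^3*(-1:ℤ)^2*4^4*(6*M)^7 : ℤ) := by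
    have := hmod.dvd
    have h := dvd_sub (Int.ModEq.dvd hmod) (dvd_neg.mpr hdvdN)
    simpa using h
  have : (2^15 * 3^7 * M^10 : ℤ) = M^3*(-1:ℤ)^2*4^4*(6*M)^7 := by ring
  rw [this]
  exact hdvd2
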